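/- arXiv:2406.14479 — 5 statements merged into one kernel-verified Lean document; each statement's English description precedes it below -/
import Mathlib

section
/- Let d ≥ 1 and let u, v ∈ ℝ^d be unit vectors whose inner product c = ⟨u, v⟩ satisfies -1 < c < 1. For x ∈ [0,1] define the linear interpolant h(x) = (1-x)·u + x·v. Then every h(x) is nonzero and the function x ↦ COS(h(x), v) = ⟨h(x), v⟩ / (‖h(x)‖·‖v‖) is strictly increasing on [0,1]; that is, for all 0 ≤ x₁ < x₂ ≤ 1, COS(h(x₁), v) < COS(h(x₂), v). -/
open scoped RealInnerProductSpace


private lemma cos_key (K p₁ p₂ w₁ w₂ n₁ n₂ : ℝ) (hK : 0 < K)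
    (hn₁ : 0 < n₁) (hn₂ : 0 < n₂)
    (hn₁sq : n₁ ^ 2 = p₁ ^ 2 + K * w₁ ^ 2)
    (hn₂sq : n₂ ^ 2 = p₂ ^ 2 + K * w₂ ^ 2)
    (hpp : p₁ < p₂) (hw₁ : 0 < w₁) (hw₂ : 0 ≤ w₂)
    (hcross : p₁ * w₂ < p₂ * w₁) :
    p₁ * n₂ < p₂ * n₁ := by
  rcases le_or_gt 0 p₁ with hp₁ | hp₁
  · have hp₂ : 0 < p₂ := lt_of_le_of_lt hp₁ hpp
    have h1 : 0 ≤ p₁ * w₂ := mul_nonneg hp₁ hw₂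
    have h2 : 0 < p₂ * w₁ := mul_pos hp₂ hw₁
    nlinarith [mul_pos hp₂ hn₁, mul_nonneg hp₁ hn₂.le,
      mul_pos (mul_pos hK (sub_pos.mpr hcross)) (by linarith : (0:ℝ) < p₂ * w₁ + p₁ * w₂),
      sq_nonneg (p₂ * n₁ - p₁ * n₂), sq_nonneg (p₂ * n₁ + p₁ * n₂)]
  · rcases le_or_gt 0 p₂ with hp₂ | hp₂
    · have hA : p₁ * n₂ < 0 := mul_neg_of_neg_of_pos hp₁ hn₂
      have hB : 0 ≤ p₂ * n₁ := mul_nonneg hp₂ hn₁.le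
      linarith
    · have hw₂' : 0 < w₂ := by
        by_contra h
        push_neg at h
        have hx2 : w₂ = 0 := le_antisymm h hw₂
        rw [hx2] at hcross
        nlinarith [mul_pos (neg_pos.mpr hp₂) hw₁]
      have h1 : p₁ * w₂ < 0 := mul_neg_of_neg_of_pos hp₁ hw₂'
      have h2 : p₂ * w₁ < 0 := mul_neg_of_neg_of_pos hp₂ hw₁
      nlinarith [mul_pos (neg_pos.mpr hp₁) hn₂, mul_pos (neg_pos.mpr hp₂) hn₁,
        mul_pos (mul_pos hK (sub_pos.mpr hcross)) (by linarith : (0:ℝ) < -(p₂ * w₁) + -(p₁ * w₂)),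
        sq_nonneg (p₂ * n₁ - p₁ * n₂), sq_nonneg (p₂ * n₁ + p₁ * n₂)]

/-- For unit vectors `u, v ∈ ℝ^d` with `-1 < ⟪u, v⟫ < 1`, the linear
interpolant `h(x) = (1-x)•u + x•v` is nonzero for all `x ∈ [0,1]`, and the cosine
similarity `x ↦ ⟪h(x), v⟫ / (‖h(x)‖ * ‖v‖)` is strictly increasing on `[0,1]`. -/
theorem cosine_similarity_strictly_increasing
    (d : ℕ) (hd : 1 ≤ d) (u v : EuclideanSpace ℝ (Fin d))
    (hu : ‖u‖ = 1) (hv : ‖v‖ = 1)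
    (hc₁ : -1 < ⟪u, v⟫) (hc₂ : ⟪u, v⟫ < 1) :
    (∀ x : ℝ, 0 ≤ x → x ≤ 1 → (1 - x) • u + x • v ≠ 0) ∧
    (∀ x₁ x₂ : ℝ, 0 ≤ x₁ → x₁ < x₂ → x₂ ≤ 1 →
      ⟪(1 - x₁) • u + x₁ • v, v⟫ / (‖(1 - x₁) • u + x₁ • v‖ * ‖v‖) <
      ⟪(1 - x₂) • u + x₂ • v, v⟫ / (‖(1 - x₂) • u + x₂ • v‖ * ‖v‖)) := by
  set c : ℝ := ⟪u, v⟫ with hc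
  have huu : ⟪u, u⟫ = 1 := by rw [real_inner_self_eq_norm_sq, hu]; norm_num
  have hvv : ⟪v, v⟫ = 1 := by rw [real_inner_self_eq_norm_sq, hv]; norm_num
  have hK : 0 < 1 - c ^ 2 := by nlinarith
  have hin : ∀ x : ℝ, ⟪(1 - x) • u + x • v, v⟫ = c + x * (1 - c) := by
    intro x
    rw [inner_add_left, real_inner_smul_left, real_inner_smul_left, hvv, ← hc]
    ring
  have hnsq : ∀ x : ℝ, ‖(1 - x) • u + x • v‖ ^ 2
      = (c + x * (1 - c)) ^ 2 + (1 - c ^ 2) * (1 - x) ^ 2 := by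
    intro x
    rw [← real_inner_self_eq_norm_sq, real_inner_add_add_self,
      real_inner_smul_left, real_inner_smul_right, real_inner_smul_left,
      real_inner_smul_right, real_inner_smul_left, real_inner_smul_right,
      huu, hvv, ← hc]
    ring
  have hpos : ∀ x : ℝ, 0 ≤ x → x ≤ 1 → 0 < ‖(1 - x) • u + x • v‖ := by
    intro x hx0 hx1
    have h2 := hnsq x
    rcases eq_or_lt_of_le hx1 with h1 | h1
    · subst h1
      have : ‖(1 - (1:ℝ)) • u + (1:ℝ) • v‖ ^ 2 = 1 := by rw [h2]; ring
      nlinarith [norm_nonneg ((1 - (1:ℝ)) • u + (1:ℝ) • v)]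
    · have hw : 0 < 1 - x := by linarith
      nlinarith [norm_nonneg ((1 - x) • u + x • v), sq_nonneg (c + x * (1 - c)),
        mul_pos hK (mul_pos hw hw)]
  constructor
  · intro x hx0 hx1 h0
    have := hpos x hx0 hx1
    rw [h0, norm_zero] at this
    exact lt_irrefl 0 this
  · intro x₁ x₂ hx₁ h12 hx₂
    have hn₁ : 0 < ‖(1 - x₁) • u + x₁ • v‖ := hpos x₁ hx₁ (by linarith)
    have hn₂ : 0 < ‖(1 - x₂) • u + x₂ • v‖ := hpos x₂ (by linarith) hx₂
    set n₁ : ℝ := ‖(1 - x₁) • u + x₁ • v‖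
    set n₂ : ℝ := ‖(1 - x₂) • u + x₂ • v‖
    set p₁ : ℝ := c + x₁ * (1 - c) with hp₁def
    set p₂ : ℝ := c + x₂ * (1 - c) with hp₂def
    have hn₁sq : n₁ ^ 2 = p₁ ^ 2 + (1 - c ^ 2) * (1 - x₁) ^ 2 := hnsq x₁
    have hn₂sq : n₂ ^ 2 = p₂ ^ 2 + (1 - c ^ 2) * (1 - x₂) ^ 2 := hnsq x₂
    rw [hin x₁, hin x₂, hv, mul_one, mul_one, div_lt_div_iff₀ hn₁ hn₂]
    -- goal : p₁ * n₂ < p₂ * n₁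
    have hw₁ : 0 < 1 - x₁ := by linarith
    have hw₂ : 0 ≤ 1 - x₂ := by linarith
    have hpp : p₁ < p₂ := by
      rw [hp₁def, hp₂def]
      nlinarith [mul_pos (sub_pos.mpr h12) (by linarith : (0:ℝ) < 1 - c)]
    have hcross : p₁ * (1 - x₂) < p₂ * (1 - x₁) := by
      rw [hp₁def, hp₂def]; nlinarith
    exact cos_key (1 - c^2) p₁ p₂ (1-x₁) (1-x₂) n₁ n₂ hK hn₁ hn₂ hn₁sq hn₂sq hpp hw₁ hw₂ hcross
end

section
/- Let d ≥ 1 and let h⁰, h^L ∈ ℝ^d be linearly independent. Suppose an L-layer network's features evolve linearly across layers: h^(ℓ) = (1 - ℓ/L)·h⁰ + (ℓ/L)·h^L for ℓ = 0, 1, …, L. Then for any layers ℓ₁ < ℓ₂ < ℓ₃ (with 0 ≤ ℓ₁, ℓ₃ ≤ L), all the features h^(ℓ) are nonzero and COS(h^(ℓ₁), h^(ℓ₃)) < COS(h^(ℓ₂), h^(ℓ₃)). -/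
open scoped RealInnerProductSpace

/-!
Writing `v = h^(ℓ₃)` and `w = h^L - h⁰`, every feature is `v + t • w` with `t = (ℓ - ℓ₃)/L ≤ 0`,
so it suffices that `t ↦ COS(v + t • w, v)` increases on `t ≤ 0`. With `A = ‖v‖²`, `B = ⟪w, v⟫`,
`C = ‖w‖²` this is `‖v‖⁻¹ (A + tB)/√(A + 2tB + t²C)`, whose derivative has the sign of
`t (B² - AC)`; linear independence makes Cauchy–Schwarz strict, `B² < AC`.
-/

section Quadratic

variable {A B C : ℝ}

lemma quadratic_pos_of_sq_lt (hA : 0 < A) (hBAC : B ^ 2 < A * C) (t : ℝ) :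
    0 < A + 2 * t * B + t ^ 2 * C := by
  have hC : 0 < C := pos_of_mul_pos_right ((sq_nonneg B).trans_lt hBAC) hA.le
  have : C * (A + 2 * t * B + t ^ 2 * C) = (C * t + B) ^ 2 + (A * C - B ^ 2) := by ring
  exact pos_of_mul_pos_right (this ▸ by nlinarith [sq_nonneg (C * t + B)]) hC.le

lemma hasDerivAt_div_sqrt_quadratic (hA : 0 < A) (hBAC : B ^ 2 < A * C) (t : ℝ) :
    HasDerivAt (fun t => (A + t * B) / √(A + 2 * t * B + t ^ 2 * C))
      (t * (B ^ 2 - A * C) / √(A + 2 * t * B + t ^ 2 * C) ^ 3) t := by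
  have hQ := quadratic_pos_of_sq_lt hA hBAC t
  have hnum : HasDerivAt (fun t => A + t * B) B t :=
    ((hasDerivAt_id t).mul_const B).const_add A |>.congr_deriv (one_mul B)
  have hden : HasDerivAt (fun t => A + 2 * t * B + t ^ 2 * C) (2 * B + 2 * t * C) t :=
    ((hasDerivAt_const t A).add (((hasDerivAt_id t).const_mul 2).mul_const B)).add
      ((hasDerivAt_pow 2 t).mul_const C) |>.congr_deriv (by norm_num)
  refine (hnum.div (hden.sqrt hQ.ne') (Real.sqrt_pos.2 hQ).ne').congr_deriv ?_
  have hsq := Real.sq_sqrt hQ.le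
  have hs := Real.sqrt_pos.2 hQ
  generalize √(A + 2 * t * B + t ^ 2 * C) = s at hs hsq ⊢
  field_simp
  linear_combination B * hsq

lemma strictMonoOn_div_sqrt_quadratic (hA : 0 < A) (hBAC : B ^ 2 < A * C) :
    StrictMonoOn (fun t => (A + t * B) / √(A + 2 * t * B + t ^ 2 * C)) (Set.Iic 0) := by
  have hderiv := hasDerivAt_div_sqrt_quadratic hA hBAC
  refine strictMonoOn_of_deriv_pos (convex_Iic 0)
    (fun t _ => (hderiv t).continuousAt.continuousWithinAt) fun t ht => ?_
  rw [interior_Iic, Set.mem_Iio] at ht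
  rw [(hderiv t).deriv]
  have := Real.sqrt_pos.2 (quadratic_pos_of_sq_lt hA hBAC t)
  exact div_pos (mul_pos_of_neg_of_neg ht (by linarith)) (by positivity)

end Quadratic

section InnerProductSpace

variable {F : Type*} [NormedAddCommGroup F] [InnerProductSpace ℝ F] {v w : F}

lemma LinearIndependent.pair_one_sub_smul_add_smul_sub (h : LinearIndependent ℝ ![v, w]) (s : ℝ) :
    LinearIndependent ℝ ![(1 - s) • v + s • w, w - v] := by
  have hsub : w - v = (-1 : ℝ) • v + (1 : ℝ) • w := by module
  rw [hsub, LinearIndependent.pair_add_smul_add_smul_iff]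
  exact ⟨h, by linarith⟩

lemma LinearIndependent.abs_real_inner_lt_norm_mul_norm (h : LinearIndependent ℝ ![v, w]) :
    |⟪v, w⟫| < ‖v‖ * ‖w‖ := by
  refine (abs_real_inner_le_norm v w).lt_of_ne fun heq => ?_
  obtain ⟨r, -, hr : w = r • v⟩ :=
    (norm_inner_eq_norm_iff (𝕜 := ℝ) (h.ne_zero 0 : v ≠ 0) (h.ne_zero 1 : w ≠ 0)).1 heq
  simpa using (LinearIndependent.pair_iff.1 h r (-1) (by rw [hr]; module)).2

lemma norm_add_smul_eq_sqrt (v w : F) (t : ℝ) :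
    ‖v + t • w‖ = √(‖v‖ ^ 2 + 2 * t * ⟪w, v⟫ + t ^ 2 * ‖w‖ ^ 2) := by
  rw [← Real.sqrt_sq (norm_nonneg (v + t • w)), norm_add_sq_real, norm_smul,
    real_inner_smul_right, real_inner_comm, mul_pow, Real.norm_eq_abs, sq_abs]
  ring_nf

lemma strictMonoOn_cos_add_smul (h : LinearIndependent ℝ ![v, w]) :
    StrictMonoOn (fun t : ℝ => ⟪v + t • w, v⟫ / (‖v + t • w‖ * ‖v‖)) (Set.Iic 0) := by
  have hv : 0 < ‖v‖ := norm_pos_iff.2 (h.ne_zero 0)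
  have hCS : ⟪w, v⟫ ^ 2 < ‖v‖ ^ 2 * ‖w‖ ^ 2 := by
    rw [← mul_pow, ← sq_abs, real_inner_comm]
    exact pow_lt_pow_left₀ h.abs_real_inner_lt_norm_mul_norm (abs_nonneg _) two_ne_zero
  intro s hs t ht hst
  have := strictMonoOn_div_sqrt_quadratic (pow_pos hv 2) hCS hs ht hst
  simp only [inner_add_left, real_inner_smul_left, real_inner_self_eq_norm_sq,
    norm_add_smul_eq_sqrt, ← div_div]
  exact div_lt_div_of_pos_right this hv

end InnerProductSpace

theorem representation_similarity_increases_general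
    (d L : ℕ) (h₀ hL : EuclideanSpace ℝ (Fin d))
    (hind : LinearIndependent ℝ ![h₀, hL])
    (feat : ℕ → EuclideanSpace ℝ (Fin d))
    (hfeat : ∀ ℓ : ℕ, ℓ ≤ L →
      feat ℓ = (1 - (ℓ : ℝ) / (L : ℝ)) • h₀ + ((ℓ : ℝ) / (L : ℝ)) • hL)
    (ℓ₁ ℓ₂ ℓ₃ : ℕ) (h₁₂ : ℓ₁ < ℓ₂) (h₂₃ : ℓ₂ < ℓ₃) (h₃L : ℓ₃ ≤ L) :
    (∀ ℓ : ℕ, ℓ ≤ L → feat ℓ ≠ 0) ∧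
    ⟪feat ℓ₁, feat ℓ₃⟫ / (‖feat ℓ₁‖ * ‖feat ℓ₃‖) <
      ⟪feat ℓ₂, feat ℓ₃⟫ / (‖feat ℓ₂‖ * ‖feat ℓ₃‖) := by
  have hLpos : (0 : ℝ) < L := by exact_mod_cast (h₁₂.trans h₂₃).trans_le h₃L |>.pos
  have hline : ∀ ℓ ≤ L, feat ℓ = feat ℓ₃ + ((ℓ : ℝ) / L - (ℓ₃ : ℝ) / L) • (hL - h₀) := by
    intro ℓ hℓ
    rw [hfeat ℓ hℓ, hfeat ℓ₃ h₃L]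
    module
  refine ⟨fun ℓ hℓ => hfeat ℓ hℓ ▸ (hind.pair_one_sub_smul_add_smul_sub _).ne_zero 0, ?_⟩
  have hcast₁₂ : (ℓ₁ : ℝ) < ℓ₂ := by exact_mod_cast h₁₂
  have hcast₂₃ : (ℓ₂ : ℝ) < ℓ₃ := by exact_mod_cast h₂₃
  have ht₁₂ : (ℓ₁ : ℝ) / L - ℓ₃ / L < ℓ₂ / L - ℓ₃ / L := by gcongr
  have ht₂ : (ℓ₂ : ℝ) / L - ℓ₃ / L ≤ 0 := by
    rw [sub_nonpos]
    gcongr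
  rw [hline ℓ₁ (by omega), hline ℓ₂ (by omega), hfeat ℓ₃ h₃L]
  exact strictMonoOn_cos_add_smul (hind.pair_one_sub_smul_add_smul_sub _)
    (ht₁₂.le.trans ht₂) ht₂ ht₁₂

/-- If the features of an `L`-layer network evolve linearly across layers,
`h^(ℓ) = (1 - ℓ/L)•h⁰ + (ℓ/L)•h^L`, with `h⁰, h^L ∈ ℝ^d` linearly independent, then all
the features are nonzero and for any layers `ℓ₁ < ℓ₂ < ℓ₃ ≤ L` the cosine similarity
satisfies `COS(h^(ℓ₁), h^(ℓ₃)) < COS(h^(ℓ₂), h^(ℓ₃))`. -/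
theorem representation_similarity_increases
    (d L : ℕ) (hd : 1 ≤ d) (h₀ hL : EuclideanSpace ℝ (Fin d))
    (hind : LinearIndependent ℝ ![h₀, hL])
    (feat : ℕ → EuclideanSpace ℝ (Fin d))
    (hfeat : ∀ ℓ : ℕ, ℓ ≤ L →
      feat ℓ = (1 - (ℓ : ℝ) / (L : ℝ)) • h₀ + ((ℓ : ℝ) / (L : ℝ)) • hL)
    (ℓ₁ ℓ₂ ℓ₃ : ℕ) (h₁₂ : ℓ₁ < ℓ₂) (h₂₃ : ℓ₂ < ℓ₃) (h₃L : ℓ₃ ≤ L) :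
    (∀ ℓ : ℕ, ℓ ≤ L → feat ℓ ≠ 0) ∧
    ⟪feat ℓ₁, feat ℓ₃⟫ / (‖feat ℓ₁‖ * ‖feat ℓ₃‖) <
      ⟪feat ℓ₂, feat ℓ₃⟫ / (‖feat ℓ₂‖ * ‖feat ℓ₃‖) :=
  representation_similarity_increases_general d L h₀ hL hind feat hfeat ℓ₁ ℓ₂ ℓ₃ h₁₂ h₂₃ h₃L
end

section
/- Let d ≥ 1 and let u, v ∈ ℝ^d be unit vectors (their inner product c = ⟨u, v⟩ thus satisfies -1 ≤ c ≤ 1). For x ∈ [0,1] define h(x) = (1-x)·u + x·v. Then for all 0 ≤ x₁ ≤ x₂ ≤ 1 such that h(x₁) ≠ 0 and h(x₂) ≠ 0, one has COS(h(x₁), v) ≤ COS(h(x₂), v). -/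
open scoped RealInnerProductSpace

private lemma key_real (c x₁ x₂ D₁ D₂ : ℝ) (hc : -1 ≤ c) (hc' : c ≤ 1)
    (hx1 : 0 ≤ x₁) (h12 : x₁ ≤ x₂) (hx2 : x₂ ≤ 1)
    (hD1 : 0 < D₁) (hD2 : 0 < D₂)
    (hD1sq : D₁ ^ 2 = (1 - x₁) ^ 2 + 2 * ((1 - x₁) * x₁ * c) + x₁ ^ 2)
    (hD2sq : D₂ ^ 2 = (1 - x₂) ^ 2 + 2 * ((1 - x₂) * x₂ * c) + x₂ ^ 2) :
    ((1 - x₁) * c + x₁) / D₁ ≤ ((1 - x₂) * c + x₂) / D₂ := by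
  rw [div_le_div_iff₀ hD1 hD2]
  set N₁ := (1 - x₁) * c + x₁ with hN1
  set N₂ := (1 - x₂) * c + x₂ with hN2
  have hkey : N₂ * (1 - x₁) - N₁ * (1 - x₂) = x₂ - x₁ := by rw [hN1, hN2]; ring
  have h1c : 0 ≤ 1 - c ^ 2 := by nlinarith
  rcases le_or_gt 0 N₂ with hN2p | hN2n
  · rcases le_or_gt N₁ 0 with hN1n | hN1p
    · have ha : N₁ * D₂ ≤ 0 := mul_nonpos_of_nonpos_of_nonneg hN1n hD2.le
      have hb : 0 ≤ N₂ * D₁ := mul_nonneg hN2p hD1.le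
      linarith
    · have hAB : N₁ * (1 - x₂) ≤ N₂ * (1 - x₁) := by linarith
      have hA : 0 ≤ N₁ * (1 - x₂) := mul_nonneg hN1p.le (by linarith)
      have hBA : 0 ≤ (N₂ * (1 - x₁)) ^ 2 - (N₁ * (1 - x₂)) ^ 2 := by
        nlinarith [mul_nonneg (sub_nonneg.mpr hAB) (add_nonneg hA (hA.trans hAB))]
      have expand : (N₂ * D₁) ^ 2 - (N₁ * D₂) ^ 2
          = (1 - c ^ 2) * ((N₂ * (1 - x₁)) ^ 2 - (N₁ * (1 - x₂)) ^ 2) := by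
        rw [mul_pow, mul_pow, hD1sq, hD2sq, hN1, hN2]; ring
      have hsq : (N₁ * D₂) ^ 2 ≤ (N₂ * D₁) ^ 2 := by
        linarith [mul_nonneg h1c hBA, expand]
      exact (pow_le_pow_iff_left₀ (mul_nonneg hN1p.le hD2.le)
        (mul_nonneg hN2p hD1.le) two_ne_zero).mp hsq
  · have hx2lt : x₂ < 1 := by
      rcases lt_or_eq_of_le hx2 with h | h
      · exact h
      · exfalso
        have : N₂ = 1 := by rw [hN2, ← h]; ring
        linarith
    have hN1n : N₁ < 0 := by
      nlinarith [mul_pos (show (0:ℝ) < -N₂ by linarith) (show (0:ℝ) < 1 - x₁ by linarith)]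
    have hAB : N₁ * (1 - x₂) ≤ N₂ * (1 - x₁) := by linarith
    have hB : N₂ * (1 - x₁) ≤ 0 := mul_nonpos_of_nonpos_of_nonneg hN2n.le (by linarith)
    have hBA : 0 ≤ (N₁ * (1 - x₂)) ^ 2 - (N₂ * (1 - x₁)) ^ 2 := by
      nlinarith [mul_nonneg (neg_nonneg.mpr (sub_nonpos.mpr hAB))
        (neg_nonneg.mpr (add_nonpos (hAB.trans hB) hB))]
    have expand : (N₁ * D₂) ^ 2 - (N₂ * D₁) ^ 2
        = (1 - c ^ 2) * ((N₁ * (1 - x₂)) ^ 2 - (N₂ * (1 - x₁)) ^ 2) := by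
      rw [mul_pow, mul_pow, hD1sq, hD2sq, hN1, hN2]; ring
    have hsq : (N₂ * D₁) ^ 2 ≤ (N₁ * D₂) ^ 2 := by
      linarith [mul_nonneg h1c hBA, expand]
    have hsq' : (-(N₂ * D₁)) ^ 2 ≤ (-(N₁ * D₂)) ^ 2 := by
      rw [neg_pow, neg_pow]; simpa using hsq
    have := (pow_le_pow_iff_left₀
      (neg_nonneg.mpr (mul_neg_of_neg_of_pos hN2n hD1).le)
      (neg_nonneg.mpr (mul_neg_of_neg_of_pos hN1n hD2).le) two_ne_zero).mp hsq'
    linarith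

/-- For unit vectors `u, v ∈ ℝ^d` and the interpolant
`h(x) = (1-x)•u + x•v`, for all `0 ≤ x₁ ≤ x₂ ≤ 1` with `h(x₁) ≠ 0` and `h(x₂) ≠ 0`,
the cosine similarity satisfies `COS(h(x₁), v) ≤ COS(h(x₂), v)`. -/
theorem cosine_similarity_monotone
    (d : ℕ) (hd : 1 ≤ d) (u v : EuclideanSpace ℝ (Fin d))
    (hu : ‖u‖ = 1) (hv : ‖v‖ = 1) :
    ∀ x₁ x₂ : ℝ, 0 ≤ x₁ → x₁ ≤ x₂ → x₂ ≤ 1 →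
      (1 - x₁) • u + x₁ • v ≠ 0 → (1 - x₂) • u + x₂ • v ≠ 0 →
      ⟪(1 - x₁) • u + x₁ • v, v⟫ / (‖(1 - x₁) • u + x₁ • v‖ * ‖v‖) ≤
      ⟪(1 - x₂) • u + x₂ • v, v⟫ / (‖(1 - x₂) • u + x₂ • v‖ * ‖v‖) := by
  intro x₁ x₂ hx1 h12 hx2 hne1 hne2
  have hcabs : |⟪u, v⟫| ≤ 1 := by
    calc |⟪u, v⟫| ≤ ‖u‖ * ‖v‖ := abs_real_inner_le_norm u v
    _ = 1 := by rw [hu, hv]; ring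
  have hvv : ⟪v, v⟫ = (1 : ℝ) := by
    rw [real_inner_self_eq_norm_sq, hv]; norm_num
  have hinner : ∀ x : ℝ, ⟪(1 - x) • u + x • v, v⟫ = (1 - x) * ⟪u, v⟫ + x := by
    intro x
    rw [inner_add_left, real_inner_smul_left, real_inner_smul_left, hvv]
    ring
  have hnormsq : ∀ x : ℝ, ‖(1 - x) • u + x • v‖ ^ 2
      = (1 - x) ^ 2 + 2 * ((1 - x) * x * ⟪u, v⟫) + x ^ 2 := by
    intro x
    rw [@norm_add_sq_real, real_inner_smul_left, real_inner_smul_right,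
      norm_smul, norm_smul, hu, hv, mul_one, mul_one, Real.norm_eq_abs,
      Real.norm_eq_abs, sq_abs, sq_abs]
    ring
  have hD1 : 0 < ‖(1 - x₁) • u + x₁ • v‖ := norm_pos_iff.mpr hne1
  have hD2 : 0 < ‖(1 - x₂) • u + x₂ • v‖ := norm_pos_iff.mpr hne2
  rw [hinner x₁, hinner x₂, hv, mul_one, mul_one]
  exact key_real ⟪u, v⟫ x₁ x₂ _ _ (abs_le.mp hcabs).1 (abs_le.mp hcabs).2 hx1 h12 hx2
    hD1 hD2 (hnormsq x₁) (hnormsq x₂)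
end

section
/- Let K ≥ 2 and d ≥ 1. Let w₁, …, w_K ∈ ℝ^d be unit vectors forming a simplex equiangular tight frame, i.e., ⟨w_i, w_j⟩ = -1/(K-1) for all i ≠ j. Fix a class k ∈ {1, …, K}, a vector h ∈ ℝ^d, a real δ > 0, and a vector η ∈ ℝ^d with ⟨w_j, η⟩ = 0 for all j ∈ {1, …, K}. Set h' = h + δ·w_k + η. Then [softmax(Wh')]_k > [softmax(Wh)]_k, where Wh ∈ ℝ^K denotes the logit vector with j-th entry ⟨w_j, h⟩. -/
open scoped RealInnerProductSpace

/-! Writing the `k`-th softmax entry as `(∑ j, exp (z j - z k))⁻¹`, it suffices that every logit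
gap `z j - z k` shrinks, one of them strictly. The update adds `δ (⟪w j, w k⟫ - 1) ≤ 0` to the
gap of class `j` (Cauchy–Schwarz for unit vectors), and the simplex ETF makes this negative as
soon as `j ≠ k`. -/

namespace Real

variable {ι : Type*} [Fintype ι]

theorem exp_div_sum_exp_eq_inv_sum_exp_sub (z : ι → ℝ) (k : ι) :
    exp (z k) / ∑ j, exp (z j) = (∑ j, exp (z j - z k))⁻¹ := by
  simp only [exp_sub, ← Finset.sum_div, inv_div]

theorem exp_div_sum_exp_lt_of_sub_le {z z' : ι → ℝ} (k : ι)
    (hle : ∀ j, z' j - z' k ≤ z j - z k) (hlt : ∃ j, z' j - z' k < z j - z k) :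
    exp (z k) / ∑ j, exp (z j) < exp (z' k) / ∑ j, exp (z' j) := by
  obtain ⟨j, hj⟩ := hlt
  rw [exp_div_sum_exp_eq_inv_sum_exp_sub, exp_div_sum_exp_eq_inv_sum_exp_sub]
  refine inv_strictAnti₀ (Finset.sum_pos (fun i _ => exp_pos _) ⟨k, Finset.mem_univ k⟩) ?_
  exact Finset.sum_lt_sum (fun i _ => exp_le_exp.2 (hle i)) ⟨j, Finset.mem_univ j, exp_lt_exp.2 hj⟩

end Real

theorem inner_add_smul_add_of_inner_eq_zero {E : Type*} [NormedAddCommGroup E]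
    [InnerProductSpace ℝ E] {v η : E} (h u : E) (δ : ℝ) (hη : ⟪v, η⟫ = 0) :
    ⟪v, h + δ • u + η⟫ = ⟪v, h⟫ + δ * ⟪v, u⟫ := by
  rw [inner_add_right, inner_add_right, real_inner_smul_right, hη, add_zero]

theorem softmax_increases_simplexETF_general
    (K d : ℕ) (hK : 2 ≤ K)
    (w : Fin K → EuclideanSpace ℝ (Fin d))
    (hnorm : ∀ i, ‖w i‖ = 1)
    (hETF : ∀ i j, i ≠ j → ⟪w i, w j⟫ = -1 / ((K : ℝ) - 1))
    (k : Fin K) (h : EuclideanSpace ℝ (Fin d)) (δ : ℝ) (hδ : 0 < δ)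
    (η : EuclideanSpace ℝ (Fin d)) (hη : ∀ j, ⟪w j, η⟫ = 0) :
    Real.exp ⟪w k, h + δ • w k + η⟫ / (∑ j, Real.exp ⟪w j, h + δ • w k + η⟫) >
    Real.exp ⟪w k, h⟫ / (∑ j, Real.exp ⟪w j, h⟫) := by
  obtain ⟨j, hjk⟩ := Fintype.exists_ne_of_one_lt_card (by rw [Fintype.card_fin]; omega) k
  have hlogit (i : Fin K) : ⟪w i, h + δ • w k + η⟫ = ⟪w i, h⟫ + δ * ⟪w i, w k⟫ :=
    inner_add_smul_add_of_inner_eq_zero h (w k) δ (hη i)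
  have hself : ⟪w k, w k⟫ = 1 := by rw [real_inner_self_eq_norm_sq, hnorm, one_pow]
  have hle (i : Fin K) : ⟪w i, w k⟫ ≤ 1 :=
    (real_inner_le_norm _ _).trans_eq (by rw [hnorm, hnorm, one_mul])
  have hlt : ⟪w j, w k⟫ < 1 := by
    rw [hETF j k hjk]
    have hK1 : (0 : ℝ) ≤ K - 1 := sub_nonneg.2 (by exact_mod_cast (by omega : 1 ≤ K))
    exact (div_nonpos_of_nonpos_of_nonneg (by norm_num) hK1).trans_lt one_pos
  refine Real.exp_div_sum_exp_lt_of_sub_le (z := fun i => ⟪w i, h⟫)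
    (z' := fun i => ⟪w i, h + δ • w k + η⟫) k (fun i => ?_) ⟨j, ?_⟩
  · simp only [hlogit, hself]
    linarith [mul_le_mul_of_nonneg_left (hle i) hδ.le]
  · simp only [hlogit, hself]
    linarith [mul_lt_mul_of_pos_left hlt hδ]

/-- Let `w₁, …, w_K ∈ ℝ^d` be a simplex ETF (unit vectors with pairwise
inner products `-1/(K-1)`). If `h' = h + δ•w_k + η` with `δ > 0` and `η` orthogonal to
every `w_j`, then the softmax probability of class `k` strictly increases:
`[softmax(Wh')]_k > [softmax(Wh)]_k`, where `(Wh)_j = ⟪w_j, h⟫`. -/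
theorem softmax_increases_simplexETF
    (K d : ℕ) (hK : 2 ≤ K) (hd : 1 ≤ d)
    (w : Fin K → EuclideanSpace ℝ (Fin d))
    (hnorm : ∀ i, ‖w i‖ = 1)
    (hETF : ∀ i j, i ≠ j → ⟪w i, w j⟫ = -1 / ((K : ℝ) - 1))
    (k : Fin K) (h : EuclideanSpace ℝ (Fin d)) (δ : ℝ) (hδ : 0 < δ)
    (η : EuclideanSpace ℝ (Fin d)) (hη : ∀ j, ⟪w j, η⟫ = 0) :
    Real.exp ⟪w k, h + δ • w k + η⟫ / (∑ j, Real.exp ⟪w j, h + δ • w k + η⟫) >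
    Real.exp ⟪w k, h⟫ / (∑ j, Real.exp ⟪w j, h⟫) :=
  softmax_increases_simplexETF_general K d hK w hnorm hETF k h δ hδ η hη
end

section
/- Let K ≥ 2 and d ≥ 1. Let w₁, …, w_K ∈ ℝ^d be unit vectors with ⟨w_i, w_j⟩ = -1/(K-1) for all i ≠ j. Fix k ∈ {1, …, K}, h ∈ ℝ^d, δ > 0, and η ∈ ℝ^d with ⟨w_j, η⟩ = 0 for all j, and set h' = h + δ·w_k + η. If class k is the top prediction at h, i.e., ⟨w_k, h⟩ > ⟨w_i, h⟩ for all i ≠ k, then class k remains the top prediction at h', i.e., ⟨w_k, h'⟩ > ⟨w_i, h'⟩ for all i ≠ k. -/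
open scoped RealInnerProductSpace

/-- For a simplex ETF classifier `w₁, …, w_K ∈ ℝ^d` (unit vectors with
pairwise inner products `-1/(K-1)`), if class `k` is the top prediction at `h`
(`⟪w_k, h⟫ > ⟪w_i, h⟫` for all `i ≠ k`), then after the update
`h' = h + δ•w_k + η` with `δ > 0` and `η` orthogonal to all `w_j`, class `k`
remains the top prediction. -/
theorem top_prediction_preserved_simplexETF
    (K d : ℕ) (hK : 2 ≤ K) (hd : 1 ≤ d)
    (w : Fin K → EuclideanSpace ℝ (Fin d))
    (hnorm : ∀ i, ‖w i‖ = 1)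
    (hETF : ∀ i j, i ≠ j → ⟪w i, w j⟫ = -1 / ((K : ℝ) - 1))
    (k : Fin K) (h : EuclideanSpace ℝ (Fin d)) (δ : ℝ) (hδ : 0 < δ)
    (η : EuclideanSpace ℝ (Fin d)) (hη : ∀ j, ⟪w j, η⟫ = 0)
    (htop : ∀ i, i ≠ k → ⟪w i, h⟫ < ⟪w k, h⟫) :
    ∀ i, i ≠ k → ⟪w i, h + δ • w k + η⟫ < ⟪w k, h + δ • w k + η⟫ := by
  intro i hi
  have hkk : ⟪w k, w k⟫ = 1 := by
    rw [real_inner_self_eq_norm_sq, hnorm]; norm_num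
  have hik := hETF i k hi
  have hK1 : (1:ℝ) ≤ (K:ℝ) - 1 := by
    have : (2:ℝ) ≤ K := by exact_mod_cast hK
    linarith
  have hlt : -1 / ((K:ℝ) - 1) < 1 := by
    have : -1 / ((K:ℝ) - 1) ≤ 0 := div_nonpos_of_nonpos_of_nonneg (by norm_num) (by linarith)
    linarith
  have hmul : δ * (-1 / ((K:ℝ) - 1)) < δ * 1 := by
    exact mul_lt_mul_of_pos_left hlt hδ
  simp only [inner_add_right, real_inner_smul_right, hη, hik, hkk]
  have := htop i hi
  nlinarith
end
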